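/- arXiv:1006.5219 — 2 statements merged into one kernel-verified Lean document; each statement's English description precedes it below -/
import Mathlib

section
/- For every symmetric g×g complex matrix τ whose imaginary part is positive definite, every z ∈ ℂ^g and every pair of characteristics a, b ∈ ℝ^g, the theta series with characteristics is absolutely summable; that is, the family m ↦ exp(iπ(m+a)ᵀτ(m+a) + 2πi(m+a)ᵀ(z+b)), indexed by m ∈ ℤ^g, is summable in ℂ. -/
/-!
Write `v = m + a ∈ ℝ^g`. The modulus of the summand is `exp(-π (vᵀ (Im τ) v + 2 vᵀ Im z))`.
Positive-definiteness gives `vᵀ (Im τ) v ≥ c |v|²` for some `c > 0`, and completing the square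
absorbs the linear term, so the summand is bounded by a constant times
`∏ᵢ exp(-π c (mᵢ + aᵢ)² / 2)`: a product of shifted one-dimensional Gaussians, each summable
over `ℤ`.
-/

open Matrix Finset

theorem summable_pi_prod_of_nonneg {ι : Type*} [Fintype ι] {κ : ι → Type*}
    {f : ∀ i, κ i → ℝ} (hf0 : ∀ i k, 0 ≤ f i k) (hf : ∀ i, Summable (f i)) :
    Summable fun x : ∀ i, κ i => ∏ i, f i (x i) := by
  classical
  refine summable_of_sum_le (c := ∏ i, ∑' k, f i k)
    (fun x => prod_nonneg fun i _ => hf0 i (x i)) fun s => ?_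
  calc ∑ x ∈ s, ∏ i, f i (x i)
      ≤ ∑ x ∈ Fintype.piFinset fun i => s.image (· i), ∏ i, f i (x i) :=
        sum_le_sum_of_subset_of_nonneg
          (fun x hx => Fintype.mem_piFinset.2 fun i => mem_image_of_mem _ hx)
          fun x _ _ => prod_nonneg fun i _ => hf0 i (x i)
    _ = ∏ i, ∑ k ∈ s.image (· i), f i k := (prod_univ_sum _ _).symm
    _ ≤ ∏ i, ∑' k, f i k :=
        prod_le_prod (fun i _ => sum_nonneg fun k _ => hf0 i k)
          fun i _ => (hf i).sum_le_tsum _ fun k _ => hf0 i k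

theorem Matrix.dotProduct_self_pos {n : Type*} [Fintype n] {v : n → ℝ} (hv : v ≠ 0) :
    0 < v ⬝ᵥ v :=
  (Fintype.sum_nonneg fun i => mul_self_nonneg (v i)).lt_of_ne' (dotProduct_self_eq_zero.not.2 hv)

theorem Matrix.PosDef.exists_pos_mul_dotProduct_self_le {n : Type*} [Fintype n]
    {Y : Matrix n n ℝ} (hY : Y.PosDef) :
    ∃ c > 0, ∀ v : n → ℝ, c * (v ⬝ᵥ v) ≤ v ⬝ᵥ Y *ᵥ v := by
  rcases isEmpty_or_nonempty n with hn | hn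
  · exact ⟨1, one_pos, fun v => by simp [Subsingleton.elim v 0]⟩
  set R : (n → ℝ) → ℝ := fun v => (v ⬝ᵥ Y *ᵥ v) / (v ⬝ᵥ v)
  have hR : ∀ (t : ℝ) (v : n → ℝ), t ≠ 0 → R (t • v) = R v := fun t v ht => by
    simp only [R, mulVec_smul, smul_dotProduct, dotProduct_smul, smul_eq_mul]
    rw [mul_div_mul_left _ _ ht, mul_div_mul_left _ _ ht]
  have hcont : ContinuousOn R (Metric.sphere 0 1) :=
    ContinuousOn.div (by fun_prop) (by fun_prop) fun v hv =>
      (dotProduct_self_pos (ne_zero_of_mem_unit_sphere ⟨v, hv⟩)).ne'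
  obtain ⟨u, hu, hmin⟩ := (isCompact_sphere (0 : n → ℝ) 1).exists_isMinOn
    ⟨fun _ => 1, by simp⟩ hcont
  have hu0 : u ≠ 0 := ne_zero_of_mem_unit_sphere ⟨u, hu⟩
  refine ⟨R u, div_pos (hY.dotProduct_mulVec_pos hu0) (dotProduct_self_pos hu0), fun v => ?_⟩
  rcases eq_or_ne v 0 with rfl | hv
  · simp
  have : R u ≤ R v := by
    simpa [hR _ _ (inv_ne_zero (norm_ne_zero_iff.2 hv))] using
      hmin (show ‖v‖⁻¹ • v ∈ Metric.sphere 0 1 by simp [norm_smul, hv])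
  exact (le_div_iff₀ (dotProduct_self_pos hv)).1 this

theorem Matrix.half_mul_dotProduct_self_sub_le {n : Type*} [Fintype n] {c : ℝ} (hc : 0 < c)
    (v y : n → ℝ) : c / 2 * (v ⬝ᵥ v) - 2 / c * (y ⬝ᵥ y) ≤ c * (v ⬝ᵥ v) + 2 * (v ⬝ᵥ y) := by
  have hsq : 0 ≤ ∑ i, c / 2 * (v i + 2 / c * y i) ^ 2 :=
    sum_nonneg fun i _ => by positivity
  have hexp : ∑ i, c / 2 * (v i + 2 / c * y i) ^ 2
      = c / 2 * (v ⬝ᵥ v) + 2 * (v ⬝ᵥ y) + 2 / c * (y ⬝ᵥ y) := by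
    simp only [dotProduct, mul_sum, ← sum_add_distrib]
    refine sum_congr rfl fun i _ => ?_
    field_simp
    ring
  linarith

open Complex in
theorem Complex.im_ofReal_dotProduct {n : Type*} [Fintype n] (v : n → ℝ) (w : n → ℂ) :
    ((fun i => (v i : ℂ)) ⬝ᵥ w).im = v ⬝ᵥ fun i => (w i).im := by
  simp [dotProduct, im_sum]

open Complex in
theorem Complex.im_ofReal_dotProduct_mulVec {n : Type*} [Fintype n] (τ : Matrix n n ℂ)
    (v : n → ℝ) :
    ((fun i => (v i : ℂ)) ⬝ᵥ τ *ᵥ fun i => (v i : ℂ)).im = v ⬝ᵥ τ.map im *ᵥ v := by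
  rw [im_ofReal_dotProduct]
  congr 1
  ext i
  simp [mulVec, dotProduct, im_sum]

open Complex Real in
theorem Complex.norm_exp_theta_exponent_ofReal {n : Type*} [Fintype n] (τ : Matrix n n ℂ)
    (v : n → ℝ) (w : n → ℂ) :
    ‖cexp (π * I * ((fun i => (v i : ℂ)) ⬝ᵥ τ *ᵥ fun i => (v i : ℂ))
        + 2 * π * I * ((fun i => (v i : ℂ)) ⬝ᵥ w))‖
      = rexp (-π * (v ⬝ᵥ τ.map im *ᵥ v + 2 * (v ⬝ᵥ fun i => (w i).im))) := by
  rw [norm_exp, ← im_ofReal_dotProduct_mulVec, ← im_ofReal_dotProduct]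
  simp only [add_re, mul_re, mul_im, ofReal_re, ofReal_im, I_re, I_im, re_ofNat, im_ofNat]
  congr 1
  ring

open Real in
theorem theta_series_summable_general (g : ℕ) (τ : Matrix (Fin g) (Fin g) ℂ)
    (hpos : (τ.map Complex.im).PosDef)
    (z : Fin g → ℂ) (a b : Fin g → ℝ) :
    Summable (fun m : Fin g → ℤ =>
      Complex.exp ((Real.pi : ℂ) * Complex.I *
          dotProduct (fun i => (m i : ℂ) + (a i : ℂ))
            (τ.mulVec fun i => (m i : ℂ) + (a i : ℂ)) +
        2 * (Real.pi : ℂ) * Complex.I *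
          dotProduct (fun i => (m i : ℂ) + (a i : ℂ))
            (fun i => z i + (b i : ℂ)))) := by
  obtain ⟨c, hc, hY⟩ := hpos.exists_pos_mul_dotProduct_self_le
  set y : Fin g → ℝ := fun i => (z i).im
  have hgauss (i : Fin g) : Summable fun n : ℤ => rexp (-π * (n + a i) ^ 2 * (c / 2)) := by
    refine (HurwitzKernelBounds.summable_f_int 0 (a i) (half_pos hc)).congr fun n => ?_
    simp [HurwitzKernelBounds.f_int]
  refine ((summable_pi_prod_of_nonneg (fun _ _ => (exp_pos _).le) hgauss).mul_left
    (rexp (2 * π / c * (y ⬝ᵥ y)))).of_norm_bounded fun m => ?_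
  set v : Fin g → ℝ := fun i => m i + a i
  have hv : (fun i => (m i : ℂ) + (a i : ℂ)) = fun i => (v i : ℂ) := by simp [v]
  rw [hv, Complex.norm_exp_theta_exponent_ofReal, ← exp_sum, ← exp_add, exp_le_exp]
  have him : (fun i => (z i + (b i : ℂ)).im) = y := by simp [y]
  have hsum : ∑ i, -π * (m i + a i) ^ 2 * (c / 2) = -π * (c / 2 * (v ⬝ᵥ v)) := by
    simp only [dotProduct, v, mul_sum]
    exact sum_congr rfl fun i _ => by ring
  rw [him, hsum]
  linear_combination π * half_mul_dotProduct_self_sub_le hc v y + π * hY v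

/-- **Absolute summability of the theta series with characteristics.**
For every symmetric `g × g` complex matrix `τ` whose imaginary part is positive
definite, every `z ∈ ℂ^g` and characteristics `a, b ∈ ℝ^g`, the family
`m ↦ exp(iπ (m+a)ᵀ τ (m+a) + 2πi (m+a)ᵀ (z+b))`, indexed by `m ∈ ℤ^g`, is
summable in `ℂ`. -/
theorem theta_series_summable (g : ℕ) (τ : Matrix (Fin g) (Fin g) ℂ)
    (hsym : τ.IsSymm) (hpos : (τ.map Complex.im).PosDef)
    (z : Fin g → ℂ) (a b : Fin g → ℝ) :
    Summable (fun m : Fin g → ℤ =>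
      Complex.exp ((Real.pi : ℂ) * Complex.I *
          dotProduct (fun i => (m i : ℂ) + (a i : ℂ))
            (τ.mulVec fun i => (m i : ℂ) + (a i : ℂ)) +
        2 * (Real.pi : ℂ) * Complex.I *
          dotProduct (fun i => (m i : ℂ) + (a i : ℂ))
            (fun i => z i + (b i : ℂ)))) :=
  theta_series_summable_general g τ hpos z a b
end

section
/- (Giambelli's formula) Let λ be a partition of rank r with Frobenius coordinates (α₁, …, α_r | β₁, …, β_r). Then the Schur polynomial of λ equals the r×r determinant of hook Schur polynomials: s_λ(x) = det( s_{(αᵢ|βⱼ)}(x) )_{1≤i,j≤r}, as an identity of polynomials in x₁, x₂, x₃, … over ℚ. -/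
open MvPolynomial

/-- The elementary Schur polynomials `p_m(x₁, x₂, …)`, defined by the generating
series `∑_{m≥0} p_m(x) tᵐ = exp(∑_{n≥1} xₙ tⁿ)` (the coefficient of `tᵐ` only
involves the terms with `k ≤ m` and `n ≤ m`, so the series may be truncated).
The variable `X n` of `MvPolynomial ℕ ℚ` stands for `xₙ` (`X 0` is unused). -/
noncomputable def elemSchur (m : ℕ) : MvPolynomial ℕ ℚ :=
  PowerSeries.coeff (R := MvPolynomial ℕ ℚ) m
    (∑ k ∈ Finset.range (m + 1),
      ((Nat.factorial k : ℚ)⁻¹) •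
        ((∑ n ∈ Finset.Icc 1 m,
          PowerSeries.monomial (R := MvPolynomial ℕ ℚ) n (MvPolynomial.X n)) ^ k))

/-- `p_k` for an integer index, with `p_k = 0` for `k < 0`. -/
noncomputable def elemSchurZ (k : ℤ) : MvPolynomial ℕ ℚ :=
  if 0 ≤ k then elemSchur k.toNat else 0

/-- The Schur polynomial `s_λ(x) = det(p_{λᵢ−i+j}(x))_{1≤i,j≤ℓ}` of a partition
`λ = (λ₁, …, λ_ℓ)` (Jacobi–Trudi form); indices `i, j` here are 0-based. -/
noncomputable def schurPoly {ℓ : ℕ} (lam : Fin ℓ → ℕ) : MvPolynomial ℕ ℚ :=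
  Matrix.det (Matrix.of fun i j : Fin ℓ =>
    elemSchurZ ((lam i : ℤ) - (i : ℤ) + (j : ℤ)))

/-- The Schur polynomial of the hook `(α|β) = (α+1, 1^β)` (Frobenius notation). -/
noncomputable def hookSchur (a b : ℕ) : MvPolynomial ℕ ℚ :=
  schurPoly (fun i : Fin (b + 1) => if i = 0 then a + 1 else 1)

/-!
Let `B = (h_{j-i})`, a unitriangular Toeplitz matrix. Row `k` of the Jacobi–Trudi matrix
`(h_{λ_k-k+j})` times `B⁻¹` is a vector `v_{λ_k-k}` depending only on `λ_k - k`; for `k ≥ r`,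
where `λ_k ≤ k`, that row is row `k - λ_k` of `B`, so `v_{λ_k-k}` is the unit vector `e_{k-λ_k}`.
The columns missed by these unit vectors are exactly the legs `β_j`, hence
`s_λ = ± det (v_{λ_i-i}(β_j))`. For a hook this reads `s_{(a|b)} = (-1)^b v_{a+1}(b)`, and the
signs agree: both sides carry `(-1)^(β_1 + ⋯ + β_r)`.
-/

open Finset Matrix Equiv Equiv.Perm

theorem Matrix.det_eq_det_submatrix_of_row_eq_one {n ι R : Type*} [Fintype n] [DecidableEq n]
    [Fintype ι] [DecidableEq ι] [CommRing R] (X : Matrix n n R) {p : ι → n}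
    (hp : Function.Injective p) (hX : ∀ x, x ∉ Set.range p → X x = (1 : Matrix n n R) x) :
    X.det = (X.submatrix p p).det := by
  let e : ι ⊕ {x // x ∉ Set.range p} ≃ n :=
    ((Equiv.ofInjective p hp).sumCongr (Equiv.refl _)).trans (Equiv.sumCompl _)
  have hblocks : X.submatrix e e = fromBlocks (X.submatrix p p) (X.submatrix p (↑)) 0 1 := by
    ext (i | ⟨x, hx⟩) (j | ⟨y, -⟩)
    · rfl
    · rfl
    · have hxj : x ≠ p j := fun h => hx ⟨j, h.symm⟩
      simp [e, hX x hx, hxj]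
    · simp [e, hX x hx, one_apply]
  rw [← det_submatrix_equiv_self e, hblocks, det_fromBlocks_zero₂₁, det_one, mul_one]

theorem Equiv.Perm.exists_sign_eq_succ_eq_of_apply_zero {n : ℕ} (τ : Perm (Fin (n + 1)))
    (h0 : τ 0 = 0) : ∃ τ' : Perm (Fin n), sign τ' = sign τ ∧ ∀ x, τ x.succ = (τ' x).succ := by
  obtain ⟨⟨p, τ'⟩, rfl⟩ := decomposeFin.symm.surjective τ
  obtain rfl : p = 0 := by simpa using h0
  exact ⟨τ', by simp, by simp⟩

theorem Equiv.Perm.sign_eq_neg_one_pow_sum_of_strictAnti_of_strictMono {n r : ℕ} (hr : r ≤ n)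
    (σ : Perm (Fin n)) (hhead : ∀ a b : Fin n, a < b → (b : ℕ) < r → σ b < σ a)
    (htail : ∀ a b : Fin n, r ≤ (a : ℕ) → a < b → σ a < σ b) :
    sign σ = (-1) ^ ∑ i : Fin r, (σ (Fin.castLE hr i) : ℕ) := by
  induction r generalizing n with
  | zero =>
    have hid : ⇑σ = id := StrictMono.eq_id fun a b hab => htail a b (Nat.zero_le _) hab
    simp [show σ = 1 from Equiv.ext (congrFun hid)]
  | succ r ih =>
    obtain ⟨n, rfl⟩ : ∃ n', n = n' + 1 := ⟨n - 1, by omega⟩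
    set m := σ 0
    -- `cycleRange m` sends `m` to `0` and is monotone on the other values
    obtain ⟨τ, hτsign, hτ⟩ :=
      exists_sign_eq_succ_eq_of_apply_zero (Fin.cycleRange m * σ) (by simp [m])
    have hσ (x : Fin n) : σ x.succ = m.succAbove (τ x) :=
      (Fin.cycleRange m).injective (by rw [Fin.cycleRange_succAbove, ← hτ]; rfl)
    have hhead' (a b : Fin n) (hab : a < b) (hb : (b : ℕ) < r) : τ b < τ a := by
      simpa [hσ, Fin.succAbove_lt_succAbove_iff] using hhead a.succ b.succ (by simpa) (by simpa)
    have htail' (a b : Fin n) (ha : r ≤ (a : ℕ)) (hab : a < b) : τ a < τ b := by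
      simpa [hσ, Fin.succAbove_lt_succAbove_iff] using htail a.succ b.succ (by simpa) (by simpa)
    have hval (i : Fin r) : (σ (Fin.castLE hr i.succ) : ℕ) = τ (Fin.castLE (by omega) i) := by
      have hlt : σ (Fin.castLE hr i.succ) < m := hhead 0 _ (by simp [Fin.lt_def]) (by simp)
      have hcast : Fin.castLE hr i.succ = (Fin.castLE (by omega) i).succ := Fin.ext (by simp)
      rw [hcast, hσ] at hlt ⊢
      rw [Fin.succAbove_of_castSucc_lt _ _ ((Fin.succAbove_lt_iff_castSucc_lt _ _).1 hlt)]
      rfl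
    have hsign : sign σ = (-1) ^ (m : ℕ) * sign τ := by
      rw [hτsign, sign_mul, Fin.sign_cycleRange, ← mul_assoc, Int.units_mul_self, one_mul]
    rw [hsign, ih (by omega) τ hhead' htail', Fin.sum_univ_succ, pow_add]
    simp only [hval]
    rfl

theorem exists_perm_castLE_eq_and_sub_eq {ℓ r : ℕ} (hr : r ≤ ℓ) {lam : Fin ℓ → ℕ}
    (hlam : Antitone lam) (htail : ∀ k : Fin ℓ, r ≤ (k : ℕ) → lam k ≤ k) {q : Fin r → Fin ℓ}
    (hq : StrictAnti q) (hcompl : ∀ j (k : Fin ℓ), r ≤ (k : ℕ) → (q j : ℕ) ≠ k - lam k) :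
    ∃ τ : Perm (Fin ℓ), (∀ i, τ (Fin.castLE hr i) = q i) ∧
      (∀ k : Fin ℓ, r ≤ (k : ℕ) → (τ k : ℕ) = k - lam k) ∧ sign τ = (-1) ^ ∑ j, (q j : ℕ) := by
  let f : Fin ℓ → Fin ℓ := fun k =>
    if hk : (k : ℕ) < r then q ⟨k, hk⟩ else ⟨k - lam k, by omega⟩
  have hf_head (i : Fin r) : f (Fin.castLE hr i) = q i := by simp [f]
  have hf_tail (k : Fin ℓ) (hk : r ≤ (k : ℕ)) : (f k : ℕ) = k - lam k := by
    simp [f, not_lt.2 hk]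
  have hhead (a b : Fin ℓ) (hab : a < b) (hb : (b : ℕ) < r) : f b < f a := by
    have ha : (a : ℕ) < r := lt_trans hab hb
    simpa [f, ha, hb] using hq (show (⟨a, ha⟩ : Fin r) < ⟨b, hb⟩ from hab)
  have htail' (a b : Fin ℓ) (ha : r ≤ (a : ℕ)) (hab : a < b) : f a < f b := by
    have := hlam hab.le
    have := htail a ha
    rw [Fin.lt_def, hf_tail a ha, hf_tail b (by omega)]
    omega
  have hne (a b : Fin ℓ) (hab : a < b) : f a ≠ f b := by
    by_cases hb : (b : ℕ) < r
    · exact (hhead a b hab hb).ne'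
    by_cases ha : (a : ℕ) < r
    · intro hfab
      refine hcompl ⟨a, ha⟩ b (not_lt.1 hb) ?_
      rw [← hf_tail b (not_lt.1 hb), ← hfab]
      simp [f, ha]
    · exact (htail' a b (not_lt.1 ha) hab).ne
  have hinj : Function.Injective f := fun a b hab => by
    by_contra h
    rcases lt_or_gt_of_ne h with h | h
    exacts [hne a b h hab, hne b a h hab.symm]
  let τ : Perm (Fin ℓ) := Equiv.ofBijective f (Finite.injective_iff_bijective.1 hinj)
  refine ⟨τ, hf_head, hf_tail, ?_⟩
  rw [sign_eq_neg_one_pow_sum_of_strictAnti_of_strictMono hr τ hhead htail']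
  simp only [τ, ofBijective_apply, hf_head]

noncomputable section

variable {R : Type*} [CommRing R]

def upperToeplitz (h : ℤ → R) (n : ℕ) : Matrix (Fin n) (Fin n) R :=
  of fun i j => h (j - i)

def jacobiTrudi (h : ℤ → R) {ℓ : ℕ} (lam : Fin ℓ → ℕ) : R :=
  det (of fun i j : Fin ℓ => h (lam i - i + j))

def reducedRow (h : ℤ → R) (ℓ : ℕ) (a : ℤ) : Fin ℓ → R :=
  (fun k : Fin ℓ => h (a + k)) ᵥ* (upperToeplitz h ℓ)⁻¹

variable {h : ℤ → R}

theorem det_upperToeplitz (h0 : h 0 = 1) (hneg : ∀ k < 0, h k = 0) (n : ℕ) :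
    (upperToeplitz h n).det = 1 := by
  rw [det_of_isUpperTriangular]
  · simp only [upperToeplitz, of_apply, sub_self, h0, prod_const_one]
  · intro i j hji
    exact hneg _ (by simp only [id, Fin.lt_def] at hji; omega)

theorem reducedRow_neg (h0 : h 0 = 1) (hneg : ∀ k < 0, h k = 0) {ℓ : ℕ} (d : Fin ℓ) :
    reducedRow h ℓ (-d) = (1 : Matrix (Fin ℓ) (Fin ℓ) R) d := by
  have hunit : IsUnit (upperToeplitz h ℓ).det := by
    rw [det_upperToeplitz h0 hneg]
    exact isUnit_one
  rw [← mul_nonsing_inv _ hunit, mul_apply_eq_vecMul, reducedRow]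
  congr
  ext k
  simp [upperToeplitz, neg_add_eq_sub]

theorem jacobiTrudi_eq_neg_one_pow_mul_det (h0 : h 0 = 1) (hneg : ∀ k < 0, h k = 0)
    {ℓ r : ℕ} (hr : r ≤ ℓ) {lam : Fin ℓ → ℕ} (hlam : Antitone lam)
    (htail : ∀ k : Fin ℓ, r ≤ (k : ℕ) → lam k ≤ k) {q : Fin r → Fin ℓ} (hq : StrictAnti q)
    (hcompl : ∀ j (k : Fin ℓ), r ≤ (k : ℕ) → (q j : ℕ) ≠ k - lam k) :
    jacobiTrudi h lam = (-1) ^ (∑ j, (q j : ℕ)) *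
      det (of fun i j : Fin r => reducedRow h ℓ (lam (Fin.castLE hr i) - i) (q j)) := by
  obtain ⟨τ, hτ_head, hτ_tail, hsign⟩ :=
    exists_perm_castLE_eq_and_sub_eq hr hlam htail hq hcompl
  let Y := (of fun i j : Fin ℓ => h (lam i - i + j)) * (upperToeplitz h ℓ)⁻¹
  have hY (k : Fin ℓ) : Y k = reducedRow h ℓ (lam k - k) := rfl
  have hY_tail (k : Fin ℓ) (hk : r ≤ (k : ℕ)) : Y k = (1 : Matrix (Fin ℓ) (Fin ℓ) R) (τ k) := by
    rw [hY, ← reducedRow_neg h0 hneg]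
    congr 1
    simp [hτ_tail k hk, Nat.cast_sub (htail k hk)]
  have hτq (i : Fin r) : τ.symm (q i) = Fin.castLE hr i := τ.symm_apply_eq.2 (hτ_head i).symm
  have hZ (x : Fin ℓ) (hx : x ∉ Set.range q) :
      Y.submatrix τ.symm id x = (1 : Matrix (Fin ℓ) (Fin ℓ) R) x := by
    have hk : r ≤ (τ.symm x : ℕ) := by
      by_contra hk
      refine hx ⟨⟨_, not_le.1 hk⟩, ?_⟩
      rw [← hτ_head]
      exact τ.apply_symm_apply x
    ext j
    rw [submatrix_apply, id, hY_tail _ hk, τ.apply_symm_apply]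
  calc jacobiTrudi h lam = det Y := by
        rw [det_mul, det_nonsing_inv, det_upperToeplitz h0 hneg, Ring.inverse_one, mul_one]
        rfl
    _ = sign τ * det (Y.submatrix τ.symm id) := by
        rw [det_permute, sign_symm, ← mul_assoc, ← Int.cast_mul, ← Units.val_mul,
          Int.units_mul_self, Units.val_one, Int.cast_one, one_mul]
    _ = _ := by
        rw [det_eq_det_submatrix_of_row_eq_one _ hq.injective hZ, hsign]
        push_cast
        congr 2
        ext i j
        rw [submatrix_apply, submatrix_apply, hτq, hY]
        rfl

theorem jacobiTrudi_castAdd (h0 : h 0 = 1) (hneg : ∀ k < 0, h k = 0) {n t : ℕ}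
    (μ : Fin (n + t) → ℕ) (hμ : ∀ i : Fin t, μ (Fin.natAdd n i) = 0) :
    jacobiTrudi h μ = jacobiTrudi h (fun i => μ (Fin.castAdd t i)) := by
  have hblocks : (of fun i j : Fin (n + t) => h (μ i - i + j)).submatrix finSumFinEquiv
      finSumFinEquiv = fromBlocks (of fun i j : Fin n => h (μ (Fin.castAdd t i) - i + j))
        (of fun (i : Fin n) (j : Fin t) => h (μ (Fin.castAdd t i) - i + (n + j))) 0
        (upperToeplitz h t) := by
    ext (i | i) (j | j)
    · rfl
    · rfl
    · simp only [submatrix_apply, finSumFinEquiv_apply_right, finSumFinEquiv_apply_left, of_apply,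
        hμ, fromBlocks_apply₂₁, Matrix.zero_apply]
      exact hneg _ (by simp only [Fin.val_natAdd, Fin.val_castAdd]; omega)
    · simp only [submatrix_apply, finSumFinEquiv_apply_right, of_apply, hμ, fromBlocks_apply₂₂,
        upperToeplitz, Fin.val_natAdd]
      congr 1
      push_cast
      ring
  rw [jacobiTrudi, ← det_submatrix_equiv_self finSumFinEquiv, hblocks, det_fromBlocks_zero₂₁,
    det_upperToeplitz h0 hneg, mul_one]
  rfl

theorem jacobiTrudi_hook (h0 : h 0 = 1) (hneg : ∀ k < 0, h k = 0) {ℓ : ℕ} (a : ℕ) {b : ℕ}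
    (hb : b < ℓ) : jacobiTrudi h (fun i : Fin (b + 1) => if i = 0 then a + 1 else 1) =
      (-1) ^ b * reducedRow h ℓ (a + 1) ⟨b, hb⟩ := by
  obtain ⟨t, rfl⟩ : ∃ t, ℓ = b + 1 + t := ⟨ℓ - (b + 1), by omega⟩
  let μ : Fin (b + 1 + t) → ℕ := fun k =>
    if (k : ℕ) = 0 then a + 1 else if (k : ℕ) ≤ b then 1 else 0
  have hμ : Antitone μ := fun x y hxy => by
    simp only [μ, Fin.le_def] at hxy ⊢
    split_ifs <;> omega
  have hpad : jacobiTrudi h (fun i : Fin (b + 1) => if i = 0 then a + 1 else 1) =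
      jacobiTrudi h μ := by
    rw [jacobiTrudi_castAdd h0 hneg μ fun i => by
      simp only [μ, Fin.val_natAdd]; split_ifs <;> omega]
    congr
    funext i
    simp only [μ, Fin.val_castAdd, Fin.ext_iff, Fin.val_zero]
    split_ifs <;> omega
  rw [hpad, jacobiTrudi_eq_neg_one_pow_mul_det h0 hneg (r := 1) (by omega) hμ
    (fun k hk => by simp only [μ]; split_ifs <;> omega) (Subsingleton.strictAnti fun _ => ⟨b, hb⟩)
    (fun _ k hk => by simp only [μ]; split_ifs <;> omega), det_fin_one, Fin.sum_univ_one, of_apply]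
  rfl

end

theorem Fin.lt_card_filter_iff_of_antitone {ℓ : ℕ} {p : Fin ℓ → Prop} [DecidablePred p]
    (hp : Antitone p) (k : Fin ℓ) : (k : ℕ) < #{i | p i} ↔ p k := by
  refine ⟨fun hk => ?_, fun hk => ?_⟩
  · by_contra hpk
    have hsub : ({i | p i} : Finset (Fin ℓ)) ⊆ Iio k := fun i hi => by
      simp only [mem_filter, mem_univ, true_and] at hi
      exact mem_Iio.2 (lt_of_not_ge fun hki => hpk (hp hki hi))
    simpa using (card_le_card hsub).trans_lt' hk
  · have hsub : Iic k ⊆ ({i | p i} : Finset (Fin ℓ)) := fun i hi => by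
      simpa using hp (mem_Iic.1 hi) hk
    simpa using card_le_card hsub

section Frobenius

variable {ℓ r : ℕ} {lam : Fin ℓ → ℕ}

theorem lt_rank_iff (hlam : Antitone lam) (hrank : r = #{i | ↑i + 1 ≤ lam i})
    (k : Fin ℓ) : (k : ℕ) < r ↔ k + 1 ≤ lam k := by
  rw [hrank]
  refine Fin.lt_card_filter_iff_of_antitone (fun i j hij (hj : (j : ℕ) + 1 ≤ lam j) => ?_) k
  have := hlam hij
  rw [Fin.le_def] at hij
  show (i : ℕ) + 1 ≤ lam i
  omega

theorem lt_conj_iff (hlam : Antitone lam) (j : ℕ) (k : Fin ℓ) :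
    (k : ℕ) < #{i | j + 1 ≤ lam i} ↔ j + 1 ≤ lam k :=
  Fin.lt_card_filter_iff_of_antitone (fun _ _ h hi => hi.trans (hlam h)) k

/-- The leg `β_{j+1} = λ'_{j+1} - (j+1)`, as a column index. -/
def frobeniusLeg (lam : Fin ℓ → ℕ) (hr : r ≤ ℓ) (j : Fin r) : Fin ℓ :=
  ⟨#{k | (j : ℕ) + 1 ≤ lam k} - (j + 1), by
    have : #{k | (j : ℕ) + 1 ≤ lam k} ≤ ℓ := (card_filter_le _ _).trans_eq (card_fin ℓ)
    omega⟩

theorem succ_le_conj (hlam : Antitone lam) (hr : r ≤ ℓ) (hrank : r = #{i | ↑i + 1 ≤ lam i})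
    (j : Fin r) : (j : ℕ) + 1 ≤ #{k | (j : ℕ) + 1 ≤ lam k} :=
  (lt_conj_iff hlam j ⟨j, by omega⟩).2 ((lt_rank_iff hlam hrank ⟨j, by omega⟩).1 j.2)

theorem strictAnti_frobeniusLeg (hlam : Antitone lam) (hr : r ≤ ℓ)
    (hrank : r = #{i | ↑i + 1 ≤ lam i}) : StrictAnti (frobeniusLeg lam hr) := by
  intro i j hij
  rw [Fin.lt_def] at hij
  have : #{k | (j : ℕ) + 1 ≤ lam k} ≤ #{k | (i : ℕ) + 1 ≤ lam k} :=
    card_le_card fun k => by simp only [mem_filter, mem_univ, true_and]; omega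
  have := succ_le_conj hlam hr hrank j
  simp only [frobeniusLeg, Fin.lt_def]
  omega

theorem frobeniusLeg_ne (hlam : Antitone lam) (hr : r ≤ ℓ)
    (hrank : r = #{i | ↑i + 1 ≤ lam i}) (j : Fin r) (k : Fin ℓ) (hk : r ≤ (k : ℕ)) :
    (frobeniusLeg lam hr j : ℕ) ≠ k - lam k := by
  have := lt_conj_iff hlam j k
  have := lt_rank_iff hlam hrank k
  have := succ_le_conj hlam hr hrank j
  simp only [frobeniusLeg]
  omega

end Frobenius

theorem elemSchurZ_zero : elemSchurZ 0 = 1 := by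
  simp [elemSchurZ, elemSchur]

theorem elemSchurZ_of_neg {k : ℤ} (hk : k < 0) : elemSchurZ k = 0 := by
  simp [elemSchurZ, not_le.2 hk]

theorem hookSchur_eq {ℓ : ℕ} (a : ℕ) {b : ℕ} (hb : b < ℓ) :
    hookSchur a b = (-1) ^ b * reducedRow elemSchurZ ℓ (a + 1) ⟨b, hb⟩ :=
  jacobiTrudi_hook elemSchurZ_zero (fun _ => elemSchurZ_of_neg) a hb

theorem giambelli_general (ℓ r : ℕ) (lam : Fin ℓ → ℕ)
    (hmono : ∀ i j : Fin ℓ, i ≤ j → lam j ≤ lam i)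
    (hr : r ≤ ℓ)
    (hrank : r = (Finset.univ.filter fun i : Fin ℓ => (i : ℕ) + 1 ≤ lam i).card) :
    schurPoly lam =
      Matrix.det (Matrix.of fun i j : Fin r =>
        hookSchur (lam ⟨i, lt_of_lt_of_le i.2 hr⟩ - ((i : ℕ) + 1))
          ((Finset.univ.filter fun k : Fin ℓ => (j : ℕ) + 1 ≤ lam k).card
            - ((j : ℕ) + 1))) := by
  have hrank' := lt_rank_iff hmono hrank
  have hentry (i j : Fin r) : hookSchur (lam ⟨i, lt_of_lt_of_le i.2 hr⟩ - ((i : ℕ) + 1))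
      (#{k | (j : ℕ) + 1 ≤ lam k} - ((j : ℕ) + 1)) =
        (-1) ^ (frobeniusLeg lam hr j : ℕ) *
          reducedRow elemSchurZ ℓ (lam ⟨i, lt_of_lt_of_le i.2 hr⟩ - i) (frobeniusLeg lam hr j) := by
    refine (hookSchur_eq _ (frobeniusLeg lam hr j).2).trans ?_
    congr 2
    have := (hrank' ⟨i, lt_of_lt_of_le i.2 hr⟩).1 i.2
    push_cast [Nat.cast_sub this]
    ring
  rw [schurPoly, ← jacobiTrudi, jacobiTrudi_eq_neg_one_pow_mul_det elemSchurZ_zero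
    (fun _ => elemSchurZ_of_neg) hr hmono (fun k hk => by have := hrank' k; omega)
    (strictAnti_frobeniusLeg hmono hr hrank) (frobeniusLeg_ne hmono hr hrank)]
  simp only [hentry]
  rw [← prod_pow_eq_pow_sum, ← det_mul_row]
  rfl

/-- **Giambelli's formula.** Let `λ = (λ₁ ≥ … ≥ λ_ℓ)` be a partition (weakly
decreasing, positive parts) of rank `r = #{i : λᵢ ≥ i}`, with Frobenius
coordinates `αᵢ = λᵢ − i`, `βᵢ = λ'ᵢ − i` (`1 ≤ i ≤ r`, `λ'` the conjugate,
`λ'ⱼ = #{i : λᵢ ≥ j}`).  Then `s_λ = det( s_{(αᵢ|βⱼ)} )_{1≤i,j≤r}`.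
Below indices are 0-based: the `(i : Fin r)`-th Frobenius coordinates are
`α_{i+1} = λ_{i+1} − (i+1)` and `β_{j+1} = λ'_{j+1} − (j+1)`. -/
theorem giambelli (ℓ r : ℕ) (lam : Fin ℓ → ℕ)
    (hmono : ∀ i j : Fin ℓ, i ≤ j → lam j ≤ lam i)
    (hpos : ∀ i, 0 < lam i)
    (hr : r ≤ ℓ)
    (hrank : r = (Finset.univ.filter fun i : Fin ℓ => (i : ℕ) + 1 ≤ lam i).card) :
    schurPoly lam =
      Matrix.det (Matrix.of fun i j : Fin r =>
        hookSchur (lam ⟨i, lt_of_lt_of_le i.2 hr⟩ - ((i : ℕ) + 1))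
          ((Finset.univ.filter fun k : Fin ℓ => (j : ℕ) + 1 ≤ lam k).card
            - ((j : ℕ) + 1))) :=
  giambelli_general ℓ r lam hmono hr hrank
end
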